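/- arXiv:1410.3805 — 2 statements merged into one kernel-verified Lean document; each statement's English description precedes it below -/
import Mathlib

section
/- For r ∈ (0,1), the density h_r(x) = (-r/ln(1-r)) · 1/(1-r+rx) is a fixed point of the Perron–Frobenius operator of T_r: for all x ∈ [0,1], f_{r,0}'(x)·h_r(f_{r,0}(x)) + |f_{r,1}'(x)|·h_r(f_{r,1}(x)) = h_r(x). -/
/-- Left inverse branch of the interpolating map `T r`. -/
noncomputable def f0 (r x : ℝ) : ℝ := x / (2 - r + r * x)

/-- Right inverse branch of the interpolating map `T r`. -/
noncomputable def f1 (r x : ℝ) : ℝ := (1 + (1 - r) * (1 - x)) / (2 - r + r * x)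

/-- The invariant density of `T r` for `r ∈ (0,1)`. -/
noncomputable def h (r x : ℝ) : ℝ := (-r / Real.log (1 - r)) * (1 / (1 - r + r * x))

/-!
Both inverse branches are linear fractional maps with common denominator `D = 2 - r + r x`, and
`|f_{r,i}'(x)| = (2 - r) / D²`. Writing `E = 1 - r + r x` and `c = -r / log (1 - r)`, one finds
`h_r(f_{r,0} x) = D / (2 - r) · c / E` and `h_r(f_{r,1} x) = D / (2 - r) · c`, so the transfer
operator gives `c / D · (1 / E + 1)`, which is `c / E` because `1 + E = D`.
-/

theorem hasDerivAt_affine_div_affine {𝕜 : Type*} [NontriviallyNormedField 𝕜] (a b c d x : 𝕜)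
    (hx : c * x + d ≠ 0) :
    HasDerivAt (fun y => (a * y + b) / (c * y + d)) ((a * d - b * c) / (c * x + d) ^ 2) x := by
  have hnum : HasDerivAt (fun y => a * y + b) a x := by
    simpa using ((hasDerivAt_id x).const_mul a).add_const b
  have hden : HasDerivAt (fun y => c * y + d) c x := by
    simpa using ((hasDerivAt_id x).const_mul c).add_const d
  exact (hnum.div hden hx).congr_deriv (by ring)

theorem hasDerivAt_f0 {r x : ℝ} (hD : 2 - r + r * x ≠ 0) :
    HasDerivAt (f0 r) ((2 - r) / (2 - r + r * x) ^ 2) x := by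
  have hf : f0 r = fun y => (1 * y + 0) / (r * y + (2 - r)) := by
    funext y; rw [f0]; ring
  rw [hf]
  exact (hasDerivAt_affine_div_affine 1 0 r (2 - r) x (by rwa [add_comm])).congr_deriv (by ring)

theorem hasDerivAt_f1 {r x : ℝ} (hD : 2 - r + r * x ≠ 0) :
    HasDerivAt (f1 r) (-(2 - r) / (2 - r + r * x) ^ 2) x := by
  have hf : f1 r = fun y => ((r - 1) * y + (2 - r)) / (r * y + (2 - r)) := by
    funext y; rw [f1]; ring
  rw [hf]
  exact (hasDerivAt_affine_div_affine (r - 1) (2 - r) r (2 - r) x (by rwa [add_comm])).congr_deriv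
    (by ring)

theorem h_comp_f0 {r x : ℝ} (hD : 2 - r + r * x ≠ 0) :
    h r (f0 r x) = (2 - r + r * x) / (2 - r) * h r x := by
  have : 1 - r + r * f0 r x = (2 - r) * (1 - r + r * x) / (2 - r + r * x) := by
    rw [f0]; field_simp; ring
  simp only [h, this]
  field_simp

theorem h_comp_f1 {r x : ℝ} (hD : 2 - r + r * x ≠ 0) :
    h r (f1 r x) = (-r / Real.log (1 - r)) * ((2 - r + r * x) / (2 - r)) := by
  have : 1 - r + r * f1 r x = (2 - r) / (2 - r + r * x) := by
    rw [f1]; field_simp; ring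
  simp only [h, this, one_div_div]

theorem stmt_3 (r : ℝ) (hr : r ∈ Set.Ioo (0:ℝ) 1) (x : ℝ) (hx : x ∈ Set.Icc (0:ℝ) 1) :
    deriv (f0 r) x * h r (f0 r x) + |deriv (f1 r) x| * h r (f1 r x) = h r x := by
  obtain ⟨hr0, hr1⟩ := hr
  have hrx : 0 ≤ r * x := mul_nonneg hr0.le hx.1
  have hE : 0 < 1 - r + r * x := by linarith
  have hD : 2 - r + r * x ≠ 0 := by linarith
  have h2r : 0 < 2 - r := by linarith
  have hderiv_f1 : deriv (f1 r) x ≤ 0 := by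
    rw [(hasDerivAt_f1 hD).deriv, neg_div]
    exact neg_nonpos.2 (div_nonneg h2r.le (sq_nonneg _))
  rw [abs_of_nonpos hderiv_f1, (hasDerivAt_f0 hD).deriv, (hasDerivAt_f1 hD).deriv, h_comp_f0 hD,
    h_comp_f1 hD]
  simp only [h]
  field_simp
  ring
end

section
/- Adjacency of cylinders determines symbolic closeness: for every r ∈ [0,1], n ∈ ℕ, and distinct words ω, ν ∈ {0,1}^n, if the cylinder sets [ω]_r = f_{r,ω}([0,1]) and [ν]_r = f_{r,ν}([0,1]) have nonempty intersection, then there exists a unique index i ∈ {1,…,n} with ω_i ≠ ν_i, and ω_j = ν_j for all j ≠ i. -/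
/-- The inverse branch labelled by a bit: `false ↦ f0`, `true ↦ f1`. -/
noncomputable def branch (r : ℝ) (b : Bool) : ℝ → ℝ := if b then f1 r else f0 r

/-- For a word `φ = (φ₁, …, φₙ)`, `fword r φ = f_{r,φ₁} ∘ ⋯ ∘ f_{r,φₙ}`. -/
noncomputable def fword (r : ℝ) : List Bool → ℝ → ℝ
  | [] => id
  | b :: l => branch r b ∘ fword r l

/-- The cylinder set `[φ]_r = f_{r,φ}([0,1])`. -/
noncomputable def cylinder (r : ℝ) (φ : List Bool) : Set ℝ := fword r φ '' Set.Icc 0 1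

/-!
On `[0,1]` the branch `f0 r` is injective with values in `[0,1/2]` and `f1 r` is injective with
values in `[1/2,1]`; the two images meet only at `1/2 = f0 r 1 = f1 r 1`. Hence if two cylinders
meet, strip the common prefix of the words: either nothing is left, or the next letters differ and
the remaining tails both have `1` in their cylinder. Since `f0 r 0 = 0` and `f1 r 0 = 1`, only the
word `10…0` has `1` in its cylinder (and only `0…0` has `0`), so the tails coincide.
-/

lemma cylinder_cons (r : ℝ) (b : Bool) (l : List Bool) :
    cylinder r (b :: l) = branch r b '' cylinder r l :=
  Set.image_comp _ _ _

lemma cylinder_ofFn_succ (r : ℝ) {n : ℕ} (ω : Fin (n + 1) → Bool) :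
    cylinder r (List.ofFn ω) = branch r (ω 0) '' cylinder r (List.ofFn (Fin.tail ω)) := by
  rw [List.ofFn_succ, cylinder_cons]
  rfl

section
variable {r x y : ℝ} (hr : r ∈ Set.Icc (0:ℝ) 1)
include hr

lemma two_sub_add_mul_pos (hx : 0 ≤ x) : 0 < 2 - r + r * x := by
  nlinarith [mul_nonneg hr.1 hx, hr.2]

lemma mapsTo_f0 : Set.MapsTo (f0 r) (Set.Icc 0 1) (Set.Icc 0 (1 / 2)) := by
  rintro x ⟨hx0, hx1⟩
  have hd := two_sub_add_mul_pos hr hx0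
  refine ⟨div_nonneg hx0 hd.le, ?_⟩
  rw [f0, div_le_iff₀ hd]
  nlinarith [hr.2, mul_nonneg hr.1 (sub_nonneg.2 hx1)]

lemma mapsTo_f1 : Set.MapsTo (f1 r) (Set.Icc 0 1) (Set.Icc (1 / 2) 1) := by
  rintro x ⟨hx0, hx1⟩
  have hd := two_sub_add_mul_pos hr hx0
  constructor
  · rw [f1, le_div_iff₀ hd]
    nlinarith [hr.2, mul_nonneg hr.1 (sub_nonneg.2 hx1)]
  · rw [f1, div_le_one hd]
    nlinarith [hr.1, mul_nonneg hr.1 hx0]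

lemma mapsTo_branch (b : Bool) : Set.MapsTo (branch r b) (Set.Icc 0 1) (Set.Icc 0 1) := by
  cases b
  · exact (mapsTo_f0 hr).mono_right (Set.Icc_subset_Icc_right (by norm_num))
  · exact (mapsTo_f1 hr).mono_right (Set.Icc_subset_Icc_left (by norm_num))

lemma injOn_branch (b : Bool) : Set.InjOn (branch r b) (Set.Icc 0 1) := by
  rintro x ⟨hx0, -⟩ y ⟨hy0, -⟩ h
  have hr2 : 0 < 2 - r := by linarith [hr.2]
  cases b <;>
  · simp only [branch, f0, f1, Bool.false_eq_true, if_false, if_true] at h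
    rw [div_eq_div_iff (two_sub_add_mul_pos hr hx0).ne' (two_sub_add_mul_pos hr hy0).ne'] at h
    nlinarith

lemma eq_one_of_f0_eq_f1 (hx : x ∈ Set.Icc (0:ℝ) 1) (hy : y ∈ Set.Icc (0:ℝ) 1)
    (h : f0 r x = f1 r y) : x = 1 ∧ y = 1 := by
  have hx_half : f0 r x = 1 / 2 := le_antisymm (mapsTo_f0 hr hx).2 (h ▸ (mapsTo_f1 hr hy).1)
  have hy_half : f1 r y = 1 / 2 := h ▸ hx_half
  rw [f0, div_eq_iff (two_sub_add_mul_pos hr hx.1).ne'] at hx_half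
  rw [f1, div_eq_iff (two_sub_add_mul_pos hr hy.1).ne'] at hy_half
  constructor <;> nlinarith [hr.2]

lemma eq_one_of_branch_eq_branch {b c : Bool} (hbc : b ≠ c) (hx : x ∈ Set.Icc (0:ℝ) 1)
    (hy : y ∈ Set.Icc (0:ℝ) 1) (h : branch r b x = branch r c y) : x = 1 ∧ y = 1 := by
  cases b <;> cases c
  · exact absurd rfl hbc
  · exact eq_one_of_f0_eq_f1 hr hx hy h
  · exact (eq_one_of_f0_eq_f1 hr hy hx h.symm).symm
  · exact absurd rfl hbc

lemma cylinder_subset_Icc : ∀ l : List Bool, cylinder r l ⊆ Set.Icc 0 1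
  | [] => by simp [cylinder, fword]
  | b :: l => by
    rw [cylinder_cons]
    exact (mapsTo_branch hr b).image_subset.trans' (Set.image_mono (cylinder_subset_Icc l))

lemma zero_mem_cylinder_cons {b : Bool} {l : List Bool} (h : (0 : ℝ) ∈ cylinder r (b :: l)) :
    b = false ∧ (0 : ℝ) ∈ cylinder r l := by
  rw [cylinder_cons] at h
  obtain ⟨y, hy, hy0⟩ := h
  have hy' := cylinder_subset_Icc hr l hy
  cases b <;> simp only [branch, Bool.false_eq_true, if_false, if_true] at hy0
  · rw [f0, div_eq_zero_iff, or_iff_left (two_sub_add_mul_pos hr hy'.1).ne'] at hy0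
    exact ⟨rfl, hy0 ▸ hy⟩
  · linarith [(mapsTo_f1 hr hy').1]

lemma one_mem_cylinder_cons {b : Bool} {l : List Bool} (h : (1 : ℝ) ∈ cylinder r (b :: l)) :
    b = true ∧ (0 : ℝ) ∈ cylinder r l := by
  rw [cylinder_cons] at h
  obtain ⟨y, hy, hy1⟩ := h
  have hy' := cylinder_subset_Icc hr l hy
  cases b <;> simp only [branch, Bool.false_eq_true, if_false, if_true] at hy1
  · linarith [(mapsTo_f0 hr hy').2]
  · rw [f1, div_eq_one_iff_eq (two_sub_add_mul_pos hr hy'.1).ne'] at hy1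
    have hy0 : y = 0 := by linarith
    exact ⟨rfl, hy0 ▸ hy⟩

lemma eq_of_zero_mem_cylinder :
    ∀ {w v : List Bool}, w.length = v.length →
      (0 : ℝ) ∈ cylinder r w → (0 : ℝ) ∈ cylinder r v → w = v
  | [], [], _, _, _ => rfl
  | _ :: w, _ :: v, hl, hw, hv => by
    obtain ⟨rfl, hw'⟩ := zero_mem_cylinder_cons hr hw
    obtain ⟨rfl, hv'⟩ := zero_mem_cylinder_cons hr hv
    rw [eq_of_zero_mem_cylinder (Nat.succ.inj hl) hw' hv']

lemma eq_of_one_mem_cylinder {w v : List Bool} (hl : w.length = v.length)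
    (hw : (1 : ℝ) ∈ cylinder r w) (hv : (1 : ℝ) ∈ cylinder r v) : w = v := by
  match w, v, hl with
  | [], [], _ => rfl
  | _ :: w, _ :: v, hl =>
    obtain ⟨rfl, hw'⟩ := one_mem_cylinder_cons hr hw
    obtain ⟨rfl, hv'⟩ := one_mem_cylinder_cons hr hv
    rw [eq_of_zero_mem_cylinder hr (Nat.succ.inj hl) hw' hv']

end

theorem subsingleton_setOf_ne_of_cylinder_inter_nonempty {r : ℝ} (hr : r ∈ Set.Icc (0:ℝ) 1) :
    ∀ {n : ℕ} (ω ν : Fin n → Bool),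
      (cylinder r (List.ofFn ω) ∩ cylinder r (List.ofFn ν)).Nonempty →
        {i | ω i ≠ ν i}.Subsingleton
  | 0, _, _, _ => Set.subsingleton_of_subsingleton
  | n + 1, ω, ν, hint => by
    rw [cylinder_ofFn_succ, cylinder_ofFn_succ] at hint
    obtain ⟨_, ⟨y, hy, rfl⟩, z, hz, hyz⟩ := hint
    have hy' := cylinder_subset_Icc hr _ hy
    have hz' := cylinder_subset_Icc hr _ hz
    by_cases hhead : ω 0 = ν 0
    · rw [hhead] at hyz
      obtain rfl : z = y := injOn_branch hr _ hz' hy' hyz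
      refine (subsingleton_setOf_ne_of_cylinder_inter_nonempty hr _ _ ⟨z, hy, hz⟩).image
        Fin.succ |>.anti ?_
      intro i hi
      induction i using Fin.cases with
      | zero => exact absurd hhead hi
      | succ i => exact ⟨i, hi, rfl⟩
    · obtain ⟨rfl, rfl⟩ := eq_one_of_branch_eq_branch hr hhead hy' hz' hyz.symm
      have htail : Fin.tail ω = Fin.tail ν :=
        List.ofFn_inj.1 (eq_of_one_mem_cylinder hr (by simp) hy hz)
      refine (Set.subsingleton_singleton (a := 0)).anti ?_
      intro i hi
      induction i using Fin.cases with
      | zero => rfl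
      | succ i => exact absurd (congrFun htail i) hi

theorem stmt_6 (r : ℝ) (hr : r ∈ Set.Icc (0:ℝ) 1) (n : ℕ) (ω ν : Fin n → Bool)
    (hne : ω ≠ ν)
    (hint : (cylinder r (List.ofFn ω) ∩ cylinder r (List.ofFn ν)).Nonempty) :
    ∃! i : Fin n, ω i ≠ ν i := by
  obtain ⟨i, hi⟩ := Function.ne_iff.1 hne
  exact ⟨i, hi, fun j hj =>
    subsingleton_setOf_ne_of_cylinder_inter_nonempty hr ω ν hint hj hi⟩
end
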